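/- Let Q be a finite faithful quandle and let α be a minimal congruence of Q. Then the center Z(Dis^α) is nontrivial if and only if there is a prime p such that Dis^α is a p-group of nilpotency class at most 2. -/

import Mathlib

/-- A quandle structure on `Q`, given by its left translations: each `L x` is a
permutation of `Q`, `x * x = x`, and `x * (y * z) = (x * y) * (x * z)`
(writing `x * y` for `L x y`). -/
structure QuandleStr (Q : Type*) where
  L : Q → Equiv.Perm Q
  idem : ∀ x : Q, L x x = x
  selfDistrib : ∀ x y z : Q, L x (L y z) = L (L x y) (L x z)

namespace QuandleStr

variable {Q : Type*} (S : QuandleStr Q)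

/-- The left multiplication group `LMlt(Q)`, generated by all left translations. -/
def Lmlt : Subgroup (Equiv.Perm Q) :=
  Subgroup.closure (Set.range S.L)

/-- The displacement group `Dis(Q)`, generated by all `L x * (L y)⁻¹`. -/
def Dis : Subgroup (Equiv.Perm Q) :=
  Subgroup.closure {g : Equiv.Perm Q | ∃ x y : Q, g = S.L x * (S.L y)⁻¹}

/-- A congruence of the quandle: an equivalence relation compatible with `*` and `\`. -/
def IsCong (θ : Setoid Q) : Prop :=
  ∀ x y u v : Q, θ.r x y → θ.r u v →
    θ.r (S.L x u) (S.L y v) ∧ θ.r ((S.L x)⁻¹ u) ((S.L y)⁻¹ v)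

/-- A quandle is faithful if `x ↦ L x` is injective. -/
def Faithful : Prop := Function.Injective S.L

/-- A quandle is connected if `LMlt(Q)` acts transitively. -/
def Connected : Prop := ∀ x y : Q, ∃ g ∈ S.Lmlt, g x = y

/-- A quandle is latin if all right translations are bijective. -/
def Latin : Prop := ∀ y : Q, Function.Bijective fun x : Q => S.L x y

/-- `θ` is a minimal congruence: not equality, and the only congruence strictly
contained in it is equality. -/
def IsMinCong (θ : Setoid Q) : Prop :=
  S.IsCong θ ∧ θ ≠ ⊥ ∧ ∀ β : Setoid Q, S.IsCong β → β < θ → β = ⊥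

/-- `θ` is a maximal congruence: not the all relation, and the only congruence strictly
containing it is the all relation. -/
def IsMaxCong (θ : Setoid Q) : Prop :=
  S.IsCong θ ∧ θ ≠ ⊤ ∧ ∀ β : Setoid Q, S.IsCong β → θ < β → β = ⊤

/-- `Dis_α`: the subgroup generated by the `L x * (L y)⁻¹` with `x α y`. -/
def DisC (r : Q → Q → Prop) : Subgroup (Equiv.Perm Q) :=
  Subgroup.closure {g : Equiv.Perm Q | ∃ x y : Q, r x y ∧ g = S.L x * (S.L y)⁻¹}

/-- `Dis^α`: the elements of `Dis(Q)` displacing every point inside its `α`-class. -/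
def DisUp (θ : Setoid Q) : Subgroup (Equiv.Perm Q) where
  carrier := {g : Equiv.Perm Q | g ∈ S.Dis ∧ ∀ x : Q, θ.r (g x) x}
  one_mem' := ⟨S.Dis.one_mem, fun x => θ.iseqv.refl x⟩
  mul_mem' := by
    rintro a b ⟨ha, ha2⟩ ⟨hb, hb2⟩
    refine ⟨S.Dis.mul_mem ha hb, fun x => ?_⟩
    rw [Equiv.Perm.mul_apply]
    exact θ.iseqv.trans (ha2 (b x)) (hb2 x)
  inv_mem' := by
    rintro a ⟨ha, ha2⟩
    refine ⟨S.Dis.inv_mem ha, fun x => ?_⟩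
    have h := ha2 (a⁻¹ x)
    rw [show a (a⁻¹ x) = x from by simp] at h
    exact θ.iseqv.symm h

end QuandleStr

/-- The orbit equivalence relation of a subgroup of permutations. -/
def orbSetoid {Q : Type*} (N : Subgroup (Equiv.Perm Q)) : Setoid Q where
  r x y := ∃ n ∈ N, n x = y
  iseqv := by
    refine ⟨fun x => ⟨1, N.one_mem, rfl⟩, ?_, ?_⟩
    · rintro x y ⟨n, hn, rfl⟩
      exact ⟨n⁻¹, N.inv_mem hn, by simp⟩
    · rintro x y z ⟨n, hn, rfl⟩ ⟨m, hm, rfl⟩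
      exact ⟨m * n, N.mul_mem hm hn, Equiv.Perm.mul_apply m n x⟩

/-!
Every nontrivial subgroup `N ≤ Dis^α` normalized by `LMlt(Q)` has as orbits the classes of a
congruence contained in `α`, so by minimality its orbits are exactly the `α`-classes: each
`h ∈ Dis^α` agrees at any given point with some element of `N`. Taking for `N` the center shows
that `Dis^α` is abelian; taking then for `N` the elements of order dividing a prime `p` (nontrivial
by Cauchy) shows `h ^ p = 1` for all `h ∈ Dis^α`. Conversely, faithfulness makes `Dis^α`
nontrivial, and a nontrivial finite `p`-group has nontrivial center.
-/

open Equiv Subgroup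

namespace Subgroup

variable {G : Type*} [Group G]

theorem map_subtype_center (H : Subgroup G) :
    (center H).map H.subtype = H ⊓ centralizer (H : Set G) := by
  ext g
  constructor
  · rintro ⟨z, hz, rfl⟩
    exact ⟨z.2, fun h hh => congrArg Subtype.val (mem_center_iff.mp hz ⟨h, hh⟩)⟩
  · rintro ⟨hg, hcomm⟩
    exact ⟨⟨g, hg⟩, mem_center_iff.mpr fun h => Subtype.ext (hcomm h h.2), rfl⟩

theorem normalizer_le_normalizer_inf_centralizer (H : Subgroup G) :
    normalizer (H : Set G) ≤ normalizer (H ⊓ centralizer (H : Set G) : Set G) := by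
  refine le_trans (le_inf le_rfl ?_) inf_normalizer_le_normalizer_inf
  rw [le_set_normalizer_iff]
  intro g hg c hc h hh
  have hh' : g⁻¹ * h * g ∈ H := by
    simpa using (le_set_normalizer_iff.mp le_rfl) g⁻¹ (inv_mem hg) h hh
  calc h * (g * c * g⁻¹) = g * ((g⁻¹ * h * g) * c) * g⁻¹ := by group
    _ = g * (c * (g⁻¹ * h * g)) * g⁻¹ := by rw [hc _ hh']
    _ = g * c * g⁻¹ * h := by group

def torsionBy (H : Subgroup G) (hH : H ≤ centralizer (H : Set G)) (n : ℕ) : Subgroup G where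
  carrier := {g | g ∈ H ∧ g ^ n = 1}
  one_mem' := ⟨H.one_mem, one_pow n⟩
  mul_mem' := by
    rintro a b ⟨ha, han⟩ ⟨hb, hbn⟩
    refine ⟨H.mul_mem ha hb, ?_⟩
    rw [Commute.mul_pow (hH hb a ha), han, hbn, one_mul]
  inv_mem' := by
    rintro a ⟨ha, han⟩
    exact ⟨H.inv_mem ha, by rw [inv_pow, han, inv_one]⟩

theorem normalizer_le_normalizer_torsionBy (H : Subgroup G) (hH : H ≤ centralizer (H : Set G))
    (n : ℕ) : normalizer (H : Set G) ≤ normalizer (H.torsionBy hH n : Set G) := by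
  rw [le_set_normalizer_iff]
  rintro g hg t ⟨ht, htn⟩
  refine ⟨(le_set_normalizer_iff.mp le_rfl) g hg t ht, ?_⟩
  rw [conj_pow, htn, mul_one, mul_inv_cancel]

theorem torsionBy_ne_bot {H : Subgroup G} [Finite H] (hH : H ≤ centralizer (H : Set G)) {p : ℕ}
    [Fact p.Prime] (hp : p ∣ Nat.card H) : H.torsionBy hH p ≠ ⊥ := by
  obtain ⟨t, ht⟩ := exists_prime_orderOf_dvd_card' p hp
  rw [← orderOf_coe] at ht
  rw [← nontrivial_iff_ne_bot, nontrivial_iff_exists_ne_one]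
  refine ⟨t, ⟨t.2, ht ▸ pow_orderOf_eq_one _⟩, fun h1 => ?_⟩
  rw [h1, orderOf_one] at ht
  exact (Fact.out : p.Prime).ne_one ht.symm

end Subgroup

namespace Equiv.Perm

variable {Q : Type*}

theorem pow_apply_eq_pow_apply_of_commute {h t : Perm Q} (hcomm : Commute h t) {x : Q}
    (hx : h x = t x) (n : ℕ) : (h ^ n) x = (t ^ n) x := by
  induction n with
  | zero => rfl
  | succ n ih =>
    calc (h ^ (n + 1)) x = (h ^ n) (t x) := by rw [pow_succ, mul_apply, hx]
      _ = t ((h ^ n) x) := by rw [← mul_apply, (hcomm.pow_left n).eq, mul_apply]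
      _ = (t ^ (n + 1)) x := by rw [ih, pow_succ', mul_apply]

variable {H N : Subgroup (Perm Q)}

theorem isMulCommutative_of_forall_orbSetoid_rel (hN : N ≤ H ⊓ centralizer (H : Set (Perm Q)))
    (horb : ∀ h ∈ H, ∀ x, (orbSetoid N).r x (h x)) : IsMulCommutative H := by
  rw [← le_centralizer_iff_isMulCommutative]
  intro k hk h hh
  ext w
  obtain ⟨a, ha, haw⟩ := horb h hh w
  obtain ⟨b, hb, hbw⟩ := horb k hk w
  have comm_apply {f g : Perm Q} (hfg : f * g = g * f) : f (g w) = g (f w) := by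
    rw [← mul_apply, hfg, mul_apply]
  calc h (k w) = h (b w) := by rw [hbw]
    _ = b (h w) := comm_apply ((hN hb).2 h hh)
    _ = b (a w) := by rw [haw]
    _ = a (b w) := comm_apply ((hN ha).2 b (hN hb).1)
    _ = a (k w) := by rw [hbw]
    _ = k (a w) := comm_apply ((hN ha).2 k hk).symm
    _ = k (h w) := by rw [haw]

theorem pow_eq_one_of_forall_orbSetoid_rel (hN : N ≤ centralizer (H : Set (Perm Q))) {n : ℕ}
    (hNn : ∀ t ∈ N, t ^ n = 1) (horb : ∀ h ∈ H, ∀ x, (orbSetoid N).r x (h x)) :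
    ∀ h ∈ H, h ^ n = 1 := by
  intro h hh
  ext x
  obtain ⟨t, ht, htx⟩ := horb h hh x
  rw [pow_apply_eq_pow_apply_of_commute (hN ht h hh) htx.symm, hNn t ht, one_apply]

end Equiv.Perm

theorem orbSetoid_ne_bot {Q : Type*} {N : Subgroup (Perm Q)} (hN : N ≠ ⊥) : orbSetoid N ≠ ⊥ := by
  obtain ⟨n, hn, hn1⟩ := N.bot_or_exists_ne_one.resolve_left hN
  obtain ⟨x, hx⟩ : ∃ x, n x ≠ x := by
    by_contra! hfix
    exact hn1 (Equiv.ext hfix)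
  intro hbot
  have hrel : (orbSetoid N).r x (n x) := ⟨n, hn, rfl⟩
  rw [hbot] at hrel
  exact hx hrel.symm

namespace QuandleStr

variable {Q : Type*} (S : QuandleStr Q)

theorem L_mem_Lmlt (x : Q) : S.L x ∈ S.Lmlt := subset_closure ⟨x, rfl⟩

theorem conj_L {g : Perm Q} (hg : g ∈ S.Lmlt) (x : Q) : g * S.L x * g⁻¹ = S.L (g x) := by
  induction hg using closure_induction generalizing x with
  | mem _ hz =>
    obtain ⟨w, rfl⟩ := hz
    rw [mul_inv_eq_iff_eq_mul]
    ext t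
    exact S.selfDistrib w x t
  | one => simp
  | mul a b _ _ iha ihb =>
    rw [Perm.mul_apply, ← iha, ← ihb]
    group
  | inv a _ iha =>
    have h := iha (a⁻¹ x)
    rw [← Perm.mul_apply, mul_inv_cancel, Perm.one_apply] at h
    rw [← h]
    group

theorem Dis_le_Lmlt : S.Dis ≤ S.Lmlt := by
  rw [Dis, closure_le]
  rintro g ⟨x, y, rfl⟩
  exact mul_mem (S.L_mem_Lmlt x) (inv_mem (S.L_mem_Lmlt y))

theorem Lmlt_le_normalizer_Dis : S.Lmlt ≤ normalizer (S.Dis : Set (Perm Q)) := by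
  rw [Dis, le_normalizer_closure_iff]
  rintro g hg _ ⟨x, y, rfl⟩
  have hconj : g * (S.L x * (S.L y)⁻¹) * g⁻¹ = (g * S.L x * g⁻¹) * (g * S.L y * g⁻¹)⁻¹ := by
    group
  rw [hconj, S.conj_L hg, S.conj_L hg]
  exact subset_closure ⟨g x, g y, rfl⟩

variable {S} {α : Setoid Q}

theorem IsCong.rel_apply (hc : S.IsCong α) {g : Perm Q} (hg : g ∈ S.Lmlt) {x y : Q}
    (hxy : α.r x y) : α.r (g x) (g y) := by
  induction hg using closure_induction'' generalizing x y with
  | mem _ hz =>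
    obtain ⟨w, rfl⟩ := hz
    exact (hc w w x y (α.refl w) hxy).1
  | inv_mem _ hz =>
    obtain ⟨w, rfl⟩ := hz
    exact (hc w w x y (α.refl w) hxy).2
  | one => exact hxy
  | mul a b _ _ iha ihb => exact iha (ihb hxy)

theorem Lmlt_le_normalizer_DisUp (hc : S.IsCong α) :
    S.Lmlt ≤ normalizer (S.DisUp α : Set (Perm Q)) := by
  rw [le_set_normalizer_iff]
  rintro g hg h ⟨hDis, hrel⟩
  refine ⟨S.Lmlt_le_normalizer_Dis hg h |>.mp hDis, fun x => ?_⟩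
  simpa using hc.rel_apply hg (hrel (g⁻¹ x))

theorem isCong_orbSetoid {N : Subgroup (Perm Q)} (hNle : N ≤ S.Lmlt)
    (hnorm : S.Lmlt ≤ normalizer (N : Set (Perm Q))) : S.IsCong (orbSetoid N) := by
  rintro x _ u _ ⟨n, hn, rfl⟩ ⟨m, hm, rfl⟩
  -- `L (n x) (m u) = n (L x (n⁻¹ m) (L x)⁻¹) (L x u)`, and similarly for `(L (n x))⁻¹`.
  have hLnx : S.L (n x) = n * S.L x * n⁻¹ := (S.conj_L (hNle hn) x).symm
  have hconj (g : Perm Q) (hg : g ∈ S.Lmlt) : g * (n⁻¹ * m) * g⁻¹ ∈ N :=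
    le_set_normalizer_iff.mp hnorm g hg _ (mul_mem (inv_mem hn) hm)
  refine ⟨⟨n * (S.L x * (n⁻¹ * m) * (S.L x)⁻¹), mul_mem hn (hconj _ (S.L_mem_Lmlt x)), ?_⟩,
    ⟨n * ((S.L x)⁻¹ * (n⁻¹ * m) * (S.L x)⁻¹⁻¹),
      mul_mem hn (hconj _ (inv_mem (S.L_mem_Lmlt x))), ?_⟩⟩ <;>
  · rw [hLnx]
    simp

theorem IsMinCong.orbSetoid_rel (hmin : S.IsMinCong α) {N : Subgroup (Perm Q)}
    (hNle : N ≤ S.DisUp α) (hN : N ≠ ⊥) (hnorm : S.Lmlt ≤ normalizer (N : Set (Perm Q)))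
    {h : Perm Q} (hh : h ∈ S.DisUp α) (x : Q) : (orbSetoid N).r x (h x) := by
  obtain ⟨-, -, hminimal⟩ := hmin
  have hle : orbSetoid N ≤ α := by
    rintro y _ ⟨n, hn, rfl⟩
    exact α.symm ((hNle hn).2 y)
  have heq : orbSetoid N = α := by
    by_contra hne
    refine orbSetoid_ne_bot hN (hminimal _ (isCong_orbSetoid ?_ hnorm) (hle.lt_of_ne hne))
    exact fun n hn => S.Dis_le_Lmlt (hNle hn).1
  rw [heq]
  exact α.symm (hh.2 x)

theorem DisUp_ne_bot (hfaith : S.Faithful) (hc : S.IsCong α) (hα : α ≠ ⊥) : S.DisUp α ≠ ⊥ := by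
  obtain ⟨x, y, hxy, hne⟩ : ∃ x y, α.r x y ∧ x ≠ y := by
    by_contra! hdiag
    exact hα (Setoid.ext fun x y => ⟨hdiag x y, fun h => h ▸ α.refl x⟩)
  have hmem : S.L x * (S.L y)⁻¹ ∈ S.DisUp α := by
    refine ⟨subset_closure ⟨x, y, rfl⟩, fun z => ?_⟩
    simpa using (hc x y _ _ hxy (α.refl ((S.L y)⁻¹ z))).1
  intro hbot
  rw [hbot, mem_bot, mul_inv_eq_one] at hmem
  exact hne (hfaith hmem)

theorem IsMinCong.isMulCommutative_DisUp (hmin : S.IsMinCong α) (hZ : center (S.DisUp α) ≠ ⊥) :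
    IsMulCommutative (S.DisUp α) := by
  have hZ' : S.DisUp α ⊓ centralizer (S.DisUp α : Set (Perm Q)) ≠ ⊥ := by
    rwa [← map_subtype_center, Ne, map_eq_bot_iff_of_injective _ (subtype_injective _)]
  refine Perm.isMulCommutative_of_forall_orbSetoid_rel le_rfl fun h hh =>
    hmin.orbSetoid_rel inf_le_left hZ' ?_ hh
  exact (Lmlt_le_normalizer_DisUp hmin.1).trans (normalizer_le_normalizer_inf_centralizer _)

theorem IsMinCong.exists_prime_forall_pow_eq_one (hmin : S.IsMinCong α) [Finite (S.DisUp α)]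
    [Nontrivial (S.DisUp α)] [IsMulCommutative (S.DisUp α)] :
    ∃ p : ℕ, p.Prime ∧ ∀ h ∈ S.DisUp α, h ^ p = 1 := by
  obtain ⟨p, hp, hpH⟩ := Nat.exists_prime_and_dvd (Finite.one_lt_card (α := S.DisUp α)).ne'
  have : Fact p.Prime := ⟨hp⟩
  set T := (S.DisUp α).torsionBy (le_centralizer _) p
  refine ⟨p, hp, Perm.pow_eq_one_of_forall_orbSetoid_rel (N := T)
    (fun _ ht => le_centralizer _ ht.1) (fun _ ht => ht.2) fun h hh => ?_⟩
  refine hmin.orbSetoid_rel (N := T) (fun _ ht => ht.1) (torsionBy_ne_bot _ hpH) ?_ hh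
  exact (Lmlt_le_normalizer_DisUp hmin.1).trans (normalizer_le_normalizer_torsionBy _ _ p)

end QuandleStr

theorem stmt3 {Q : Type*} [Finite Q] (S : QuandleStr Q) (hfaith : S.Faithful)
    (α : Setoid Q) (hmin : S.IsMinCong α) :
    Subgroup.center ↥(S.DisUp α) ≠ ⊥ ↔
      ∃ p : ℕ, p.Prime ∧ IsPGroup p ↥(S.DisUp α) ∧
        commutator ↥(S.DisUp α) ≤ Subgroup.center ↥(S.DisUp α) := by
  constructor
  · intro hZ
    have := hmin.isMulCommutative_DisUp hZ
    rw [center_eq_top] at hZ ⊢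
    have : Nontrivial (S.DisUp α) := Subgroup.nontrivial_iff.mp ⟨⟨⊤, ⊥, hZ⟩⟩
    obtain ⟨p, hp, hexp⟩ := hmin.exists_prime_forall_pow_eq_one
    exact ⟨p, hp, fun h => ⟨1, Subtype.ext (by simpa using hexp h h.2)⟩, le_top⟩
  · rintro ⟨p, hp, hpH, -⟩
    have : Fact p.Prime := ⟨hp⟩
    have := (nontrivial_iff_ne_bot _).mpr (S.DisUp_ne_bot hfaith hmin.1 hmin.2.1)
    exact (nontrivial_iff_ne_bot _).mp hpH.center_nontrivial
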